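/- arXiv:1806.05066 — 2 statements merged into one kernel-verified Lean document; each statement's English description precedes it below -/
import Mathlib

section
/- Let $A, B$ be nonpositive operators (in the sense of Komatsu) on a Banach space $X$ with $D(A) \subseteq D(B)$ and $A - B \in \mathcal{I}$ for a symmetrically normed operator ideal $\mathcal{I}$. Let $\varphi(z)=\int_{(0,\infty)} \frac{z}{t-z} d\mu(t)$ be a negative complete Bernstein function with $\varphi'(-0) := \int_{(0,\infty)} d\mu(t)/t < \infty$. Then $\varphi(A)-\varphi(B) \in \mathcal{I}$ and $\|\varphi(A)-\varphi(B)\|_{\mathcal{I}} \le M_A M_B \varphi'(-0)\|A-B\|_{\mathcal{I}}$. -/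
/-!
The integrand `t • R(t,A) W R(t,B)` lies in `I`, and `t ‖R(t,·)‖ ≤ M` gives
`‖t • R(t,A) W R(t,B)‖_I ≤ M_A M_B ‖W‖_I / t`, a μ-integrable bound since `∫ dμ(t)/t < ∞`.
The ideal norm dominates the operator norm, so this bound also makes the integrand Bochner
integrable as soon as it is measurable; measurability follows from continuity of the resolvents
on `(0, ∞)`, which the resolvent identity `R(t) - R(s) = (s - t) R(t) R(s)` together with the
bound `‖R(t)‖ ≤ M / t` provides. Closure of `I` under dominated integrals concludes.
-/

open MeasureTheory Set

variable {X : Type*} [NormedAddCommGroup X] [NormedSpace ℂ X] [CompleteSpace X]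

/-- `R` is the resolvent of the (possibly unbounded) operator `A` at the real point `t`,
i.e. `R` is an everywhere defined two-sided bounded inverse of `t•I - A`. -/
structure IsResolvent (A : X →ₗ.[ℂ] X) (t : ℝ) (R : X →L[ℂ] X) : Prop where
  mem : ∀ x : X, R x ∈ A.domain
  right_inv : ∀ x : X, (t : ℂ) • (R x) - A ⟨R x, mem x⟩ = x
  left_inv : ∀ x : A.domain, R ((t : ℂ) • (x : X) - A x) = x

/-- The sum of an unbounded operator and a bounded operator, defined on the domain of the
unbounded one. -/
noncomputable def pAdd (A : X →ₗ.[ℂ] X) (V : X →L[ℂ] X) : X →ₗ.[ℂ] X where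
  domain := A.domain
  toFun := A.toFun + (V : X →ₗ[ℂ] X).comp A.domain.subtype

/-- A symmetrically normed operator ideal in `L(X)`: a two-sided ideal with a complete norm
`inorm` dominating the operator norm and satisfying `‖A S B‖_I ≤ ‖A‖ ‖S‖_I ‖B‖`.
Completeness is encoded through closure under Bochner integration with a dominating
`I`-norm bound. -/
structure OperatorIdeal (X : Type*) [NormedAddCommGroup X] [NormedSpace ℂ X] where
  Mem : (X →L[ℂ] X) → Prop
  inorm : (X →L[ℂ] X) → ℝ
  zero_mem : Mem 0
  add_mem : ∀ {S T}, Mem S → Mem T → Mem (S + T)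
  smul_mem : ∀ (c : ℂ) {S}, Mem S → Mem (c • S)
  comp_mem : ∀ (A : X →L[ℂ] X) {S} (B : X →L[ℂ] X), Mem S → Mem (A.comp (S.comp B))
  inorm_nonneg : ∀ S, 0 ≤ inorm S
  inorm_add_le : ∀ S T, inorm (S + T) ≤ inorm S + inorm T
  inorm_smul : ∀ (c : ℂ) (S), inorm (c • S) = ‖c‖ * inorm S
  inorm_comp_le : ∀ (A S B : X →L[ℂ] X), Mem S →
    inorm (A.comp (S.comp B)) ≤ ‖A‖ * inorm S * ‖B‖
  opNorm_le_inorm : ∀ S, Mem S → ‖S‖ ≤ inorm S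
  integral_mem : ∀ (μ : MeasureTheory.Measure ℝ) (f : ℝ → (X →L[ℂ] X)) (g : ℝ → ℝ),
    MeasureTheory.Integrable g μ → (∀ᵐ t ∂μ, Mem (f t) ∧ inorm (f t) ≤ g t) →
    MeasureTheory.Integrable f μ →
    Mem (∫ t, f t ∂μ) ∧ inorm (∫ t, f t ∂μ) ≤ ∫ t, g t ∂μ

open ContinuousLinearMap

section Resolvent

variable {E : Type*} [NormedAddCommGroup E] [NormedSpace ℂ E] {A : E →ₗ.[ℂ] E}

theorem IsResolvent.sub_eq_smul_comp {t s : ℝ} {Rt Rs : E →L[ℂ] E}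
    (ht : IsResolvent A t Rt) (hs : IsResolvent A s Rs) :
    Rt - Rs = ((s : ℂ) - t) • Rt.comp Rs := by
  ext x
  set y : A.domain := ⟨Rs x, hs.mem x⟩
  have hy : (t : ℂ) • (y : E) - A y = ((t : ℂ) - s) • (y : E) + x := by
    rw [← hs.right_inv x]; module
  have key := ht.left_inv y
  rw [hy, map_add, map_smul] at key
  simp only [sub_apply, smul_apply, comp_apply]
  have hx : Rt x = Rs x - ((t : ℂ) - s) • Rt (Rs x) := eq_sub_of_add_eq' key
  rw [hx]
  module

theorem continuousOn_resolvent_of_norm_le {R : ℝ → E →L[ℂ] E} {M : ℝ}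
    (hR : ∀ t > 0, IsResolvent A t (R t)) (hM : ∀ t > 0, t * ‖R t‖ ≤ M) :
    ContinuousOn R (Ioi 0) := by
  intro s (hs : 0 < s)
  have hnorm : ∀ t > 0, ‖R t‖ ≤ M / t := fun t ht => by
    rw [le_div_iff₀ ht, mul_comm]; exact hM t ht
  have hdist : ∀ t ∈ Ioi 0, ‖R t - R s‖ ≤ |s - t| * (M / t * (M / s)) := fun t (ht : 0 < t) => by
    rw [(hR t ht).sub_eq_smul_comp (hR s hs), norm_smul, ← Complex.ofReal_sub, Complex.norm_real,
      Real.norm_eq_abs]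
    gcongr
    exact (opNorm_comp_le _ _).trans
      (mul_le_mul (hnorm t ht) (hnorm s hs) (norm_nonneg _) ((norm_nonneg _).trans (hnorm t ht)))
  rw [ContinuousWithinAt, ← tendsto_sub_nhds_zero_iff]
  refine squeeze_zero_norm' (eventually_nhdsWithin_of_forall hdist) ?_
  have hlim : ContinuousAt (fun t => |s - t| * (M / t * (M / s))) s := by
    fun_prop (disch := exact hs.ne')
  simpa using hlim.tendsto.mono_left nhdsWithin_le_nhds

end Resolvent

namespace OperatorIdeal

variable {E : Type*} [NormedAddCommGroup E] [NormedSpace ℂ E] (I : OperatorIdeal E)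

theorem inorm_smul_comp_le {P S Q : E →L[ℂ] E} (hS : I.Mem S) {t a b : ℝ} (ht : 0 < t)
    (hP : t * ‖P‖ ≤ a) (hQ : t * ‖Q‖ ≤ b) :
    I.inorm ((t : ℂ) • P.comp (S.comp Q)) ≤ a * b * I.inorm S * t⁻¹ := by
  have ha : 0 ≤ a := (by positivity : 0 ≤ t * ‖P‖).trans hP
  have hS₀ := I.inorm_nonneg S
  rw [I.inorm_smul, Complex.norm_real, Real.norm_of_nonneg ht.le, ← div_eq_mul_inv,
    le_div_iff₀ ht]
  calc t * I.inorm (P.comp (S.comp Q)) * t ≤ t * (‖P‖ * I.inorm S * ‖Q‖) * t := by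
        gcongr; exact I.inorm_comp_le _ _ _ hS
    _ = (t * ‖P‖) * (t * ‖Q‖) * I.inorm S := by ring
    _ ≤ a * b * I.inorm S := by gcongr

theorem integral_mem_of_aestronglyMeasurable {μ : Measure ℝ} {f : ℝ → E →L[ℂ] E} {g : ℝ → ℝ}
    (hf : AEStronglyMeasurable f μ) (hg : Integrable g μ)
    (hfg : ∀ᵐ t ∂μ, I.Mem (f t) ∧ I.inorm (f t) ≤ g t) :
    I.Mem (∫ t, f t ∂μ) ∧ I.inorm (∫ t, f t ∂μ) ≤ ∫ t, g t ∂μ :=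
  I.integral_mem μ f g hg hfg <|
    hg.mono' hf <| hfg.mono fun _ h => (I.opNorm_le_inorm _ h.1).trans h.2

end OperatorIdeal

theorem Bernstein_difference_nonpositive_general
    (I : OperatorIdeal X)
    (A B : X →ₗ.[ℂ] X)
    (RA RB : ℝ → (X →L[ℂ] X))
    (hRA : ∀ t > (0 : ℝ), IsResolvent A t (RA t))
    (hRB : ∀ t > (0 : ℝ), IsResolvent B t (RB t))
    (MA MB : ℝ)
    (hMA : IsLUB ((fun t => t * ‖RA t‖) '' Ioi (0 : ℝ)) MA)
    (hMB : IsLUB ((fun t => t * ‖RB t‖) '' Ioi (0 : ℝ)) MB)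
    (W : X →L[ℂ] X) (hW : I.Mem W)
    (μ : Measure ℝ) (hsupp : μ (Iic (0 : ℝ)) = 0)
    (hμ' : Integrable (fun t => t⁻¹) μ) :
    I.Mem (∫ t, (t : ℂ) • ((RA t).comp (W.comp (RB t))) ∂μ) ∧
      I.inorm (∫ t, (t : ℂ) • ((RA t).comp (W.comp (RB t))) ∂μ) ≤
        MA * MB * (∫ t, t⁻¹ ∂μ) * I.inorm W := by
  have hMA' : ∀ t > 0, t * ‖RA t‖ ≤ MA := fun t ht => hMA.1 (mem_image_of_mem _ ht)
  have hMB' : ∀ t > 0, t * ‖RB t‖ ≤ MB := fun t ht => hMB.1 (mem_image_of_mem _ ht)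
  have hpos : ∀ᵐ t ∂μ, t ∈ Ioi (0 : ℝ) :=
    show Ioi 0 ∈ ae μ from mem_ae_iff.2 (by rwa [compl_Ioi])
  have hcont : ContinuousOn (fun t : ℝ => (t : ℂ) • (RA t).comp (W.comp (RB t))) (Ioi 0) :=
    Complex.continuous_ofReal.continuousOn.smul
      ((continuousOn_resolvent_of_norm_le hRA hMA').clm_comp
        (continuousOn_const.clm_comp (continuousOn_resolvent_of_norm_le hRB hMB')))
  have hmeas : AEStronglyMeasurable (fun t : ℝ => (t : ℂ) • (RA t).comp (W.comp (RB t))) μ := by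
    simpa [Measure.restrict_eq_self_of_ae_mem hpos] using
      hcont.aestronglyMeasurable (μ := μ) measurableSet_Ioi
  obtain ⟨hmem, hle⟩ := I.integral_mem_of_aestronglyMeasurable hmeas
    (hμ'.const_mul (MA * MB * I.inorm W)) <| hpos.mono fun t ht =>
      ⟨I.smul_mem _ (I.comp_mem _ _ hW), I.inorm_smul_comp_le hW ht (hMA' t ht) (hMB' t ht)⟩
  refine ⟨hmem, hle.trans_eq ?_⟩
  rw [integral_const_mul]
  ring

/-- Lemma 2(ii): for nonpositive operators `A, B` with `D(A) ⊆ D(B)` whose difference extends to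
an operator `W` of a symmetrically normed ideal `I`, if `φ'(-0) = ∫ dμ(t)/t < ∞` then
`φ(A) - φ(B) = ∫ t R(t,A)(A-B)R(t,B) dμ(t)` belongs to `I` and
`‖φ(A)-φ(B)‖_I ≤ M_A M_B φ'(-0) ‖A-B‖_I`. -/
theorem Bernstein_difference_nonpositive
    (I : OperatorIdeal X)
    (A B : X →ₗ.[ℂ] X)
    (hAclosed : IsClosed (A.graph : Set (X × X)))
    (hBclosed : IsClosed (B.graph : Set (X × X)))
    (hAdense : Dense (A.domain : Set X)) (hBdense : Dense (B.domain : Set X))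
    (RA RB : ℝ → (X →L[ℂ] X))
    (hRA : ∀ t > (0 : ℝ), IsResolvent A t (RA t))
    (hRB : ∀ t > (0 : ℝ), IsResolvent B t (RB t))
    (MA MB : ℝ)
    (hMA : IsLUB ((fun t => t * ‖RA t‖) '' Ioi (0 : ℝ)) MA)
    (hMB : IsLUB ((fun t => t * ‖RB t‖) '' Ioi (0 : ℝ)) MB)
    (hdom : A.domain ≤ B.domain)
    (W : X →L[ℂ] X) (hW : I.Mem W)
    (hWext : ∀ x : A.domain, W (x : X) = A x - B ⟨(x : X), hdom x.2⟩)
    (μ : Measure ℝ) (hsupp : μ (Iic (0 : ℝ)) = 0)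
    (hμ : Integrable (fun t => (1 + t)⁻¹) μ)
    (hμ' : Integrable (fun t => t⁻¹) μ) :
    I.Mem (∫ t, (t : ℂ) • ((RA t).comp (W.comp (RB t))) ∂μ) ∧
      I.inorm (∫ t, (t : ℂ) • ((RA t).comp (W.comp (RB t))) ∂μ) ≤
        MA * MB * (∫ t, t⁻¹ ∂μ) * I.inorm W :=
  Bernstein_difference_nonpositive_general I A B RA RB hRA hRB MA MB hMA hMB W hW μ hsupp hμ'
end

section
/- Let $X$ be a Banach space with the approximation property, and let $A, B, C$ be nonpositive operators with $A - B$ and $B - C$ nuclear (and suitable domain inclusions). Then for all $\lambda > 0$: $\Delta_{B/A}(\lambda)\,\Delta_{C/B}(\lambda) = \Delta_{C/A}(\lambda)$; in particular $\Delta_{B/A}(\lambda)\,\Delta_{A/B}(\lambda) = 1$. -/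
open MeasureTheory Set

variable {X : Type*} [NormedAddCommGroup X] [NormedSpace ℂ X] [CompleteSpace X]

/-- The perturbation determinant `Δ_{B/A}(λ) = exp(tr(ψ_λ(B) - ψ_λ(A)))`, where
`ψ_λ(s) = log λ - log(λ - s)` and, via the Hirsch calculus,
`ψ_λ(B) - ψ_λ(A) = ∫_λ^∞ (R(t,B) - R(t,A)) dt`, expressed through the resolvents
`RA, RB` of `A`, `B` and a trace `tr` on the nuclear operators. -/
noncomputable def pdet {X : Type*} [NormedAddCommGroup X] [NormedSpace ℂ X]
    [CompleteSpace X] (tr : (X →L[ℂ] X) → ℂ) (RA RB : ℝ → (X →L[ℂ] X)) (lam : ℝ) : ℂ :=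
  Complex.exp (tr (∫ t in Ioi lam, (RB t - RA t)))

/-!
The second resolvent identity `R(t,B) - R(t,A) = R(t,B) (B - A) R(t,A)` and the bounds
`‖R(t,·)‖ ≤ M/t` put `R(t,B) - R(t,A)` in the nuclear ideal with nuclear norm `O(t⁻²)`, so its
integral over `(λ, ∞)` converges in the ideal. These integrals telescope and the trace is additive
on the ideal, so the determinants multiply; with `C = A` the product is `exp (tr 0) = 1`.
-/

theorem norm_le_div_of_mem_upperBounds {F : Type*} [NormedAddCommGroup F] {R : ℝ → F} {M : ℝ}
    (hM : M ∈ upperBounds ((fun t => t * ‖R t‖) '' Ioi 0)) {t : ℝ} (ht : 0 < t) :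
    ‖R t‖ ≤ M / t :=
  (le_div_iff₀' ht).mpr (hM (mem_image_of_mem _ ht))

section Resolvents

variable {E : Type*} [NormedAddCommGroup E] [NormedSpace ℂ E]

namespace IsResolvent

variable {A B : E →ₗ.[ℂ] E} {R R' : E →L[ℂ] E}

theorem sub_eq_smul_comp_s15 {s t : ℝ} (hs : IsResolvent A s R) (ht : IsResolvent A t R') :
    R - R' = ((t : ℂ) - s) • R'.comp R := by
  ext x
  obtain ⟨u, rfl⟩ : ∃ u : A.domain, (s : ℂ) • (u : E) - A u = x :=
    ⟨⟨R x, hs.mem x⟩, hs.right_inv x⟩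
  have hsplit : (s : ℂ) • (u : E) - A u =
      ((t : ℂ) • (u : E) - A u) - ((t : ℂ) - s) • (u : E) := by
    rw [sub_smul]; abel
  simp only [sub_apply, smul_apply, ContinuousLinearMap.comp_apply, hs.left_inv u]
  rw [hsplit, map_sub, ht.left_inv u, map_smul]
  abel

theorem sub_eq_comp_comp {t : ℝ} (hA : IsResolvent A t R) (hB : IsResolvent B t R')
    (hdom : A.domain ≤ B.domain) {W : E →L[ℂ] E}
    (hW : ∀ x : A.domain, W (x : E) = B ⟨(x : E), hdom x.2⟩ - A x) :
    R' - R = R'.comp (W.comp R) := by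
  ext x
  obtain ⟨u, rfl⟩ : ∃ u : A.domain, (t : ℂ) • (u : E) - A u = x :=
    ⟨⟨R x, hA.mem x⟩, hA.right_inv x⟩
  have hsplit : (t : ℂ) • (u : E) - A u =
      ((t : ℂ) • (u : E) - B ⟨u, hdom u.2⟩) + (B ⟨u, hdom u.2⟩ - A u) := by
    abel
  simp only [sub_apply, ContinuousLinearMap.comp_apply, hA.left_inv u, hW u]
  rw [hsplit, map_add, hB.left_inv ⟨u, hdom u.2⟩]
  abel

end IsResolvent

section ResolventFamily

variable {A : E →ₗ.[ℂ] E} {R : ℝ → (E →L[ℂ] E)} {M : ℝ}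

theorem norm_resolvent_sub_le (hR : ∀ t > (0 : ℝ), IsResolvent A t (R t))
    (hM : ∀ t > (0 : ℝ), ‖R t‖ ≤ M / t) {a s t : ℝ} (ha : 0 < a) (hs : a ≤ s) (ht : a ≤ t) :
    ‖R s - R t‖ ≤ (M / a) ^ 2 * |s - t| := by
  have hs0 : 0 < s := ha.trans_le hs
  have ht0 : 0 < t := ha.trans_le ht
  have hM0 : 0 ≤ M := by simpa using (norm_nonneg _).trans (hM 1 one_pos)
  have hRa : ∀ u, a ≤ u → ‖R u‖ ≤ M / a := fun u hu =>
    (hM u (ha.trans_le hu)).trans (div_le_div_of_nonneg_left hM0 ha hu)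
  rw [(hR s hs0).sub_eq_smul_comp_s15 (hR t ht0), norm_smul, ← Complex.ofReal_sub,
    Complex.norm_real, Real.norm_eq_abs, abs_sub_comm, mul_comm, sq]
  gcongr
  exact ((R t).opNorm_comp_le (R s)).trans
    (mul_le_mul (hRa t ht) (hRa s hs) (norm_nonneg _) (div_nonneg hM0 ha.le))

theorem continuousOn_Ioi_of_isResolvent (hR : ∀ t > (0 : ℝ), IsResolvent A t (R t))
    (hM : ∀ t > (0 : ℝ), ‖R t‖ ≤ M / t) {a : ℝ} (ha : 0 < a) : ContinuousOn R (Ioi a) := by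
  have hLip : LipschitzOnWith ((M / a) ^ 2).toNNReal R (Ici a) :=
    LipschitzOnWith.of_dist_le_mul fun s hs t ht => by
      rw [dist_eq_norm, Real.dist_eq, Real.coe_toNNReal _ (sq_nonneg _)]
      exact norm_resolvent_sub_le hR hM ha hs ht
  exact hLip.continuousOn.mono Ioi_subset_Ici_self

end ResolventFamily

theorem OperatorIdeal.integrable_and_mem_integral (S : OperatorIdeal E) {μ : Measure ℝ}
    {f : ℝ → (E →L[ℂ] E)} {g : ℝ → ℝ}
    (hf : AEStronglyMeasurable f μ) (hg : Integrable g μ)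
    (hfg : ∀ᵐ t ∂μ, S.Mem (f t) ∧ S.inorm (f t) ≤ g t) :
    Integrable f μ ∧ S.Mem (∫ t, f t ∂μ) := by
  have hint : Integrable f μ := hg.mono' hf <| hfg.mono fun t ht =>
    (S.opNorm_le_inorm _ ht.1).trans ht.2
  exact ⟨hint, (S.integral_mem μ f g hg hfg hint).1⟩

theorem integrableOn_resolvent_sub_and_mem_integral (S : OperatorIdeal E)
    {A B : E →ₗ.[ℂ] E} {RA RB : ℝ → (E →L[ℂ] E)} {MA MB : ℝ}
    (hRA : ∀ t > (0 : ℝ), IsResolvent A t (RA t)) (hRB : ∀ t > (0 : ℝ), IsResolvent B t (RB t))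
    (hMA : ∀ t > (0 : ℝ), ‖RA t‖ ≤ MA / t) (hMB : ∀ t > (0 : ℝ), ‖RB t‖ ≤ MB / t)
    (hdom : A.domain ≤ B.domain) {W : E →L[ℂ] E} (hW : S.Mem W)
    (hWext : ∀ x : A.domain, W (x : E) = B ⟨(x : E), hdom x.2⟩ - A x) {lam : ℝ}
    (hlam : 0 < lam) :
    IntegrableOn (fun t => RB t - RA t) (Ioi lam) ∧ S.Mem (∫ t in Ioi lam, (RB t - RA t)) := by
  have hMB0 : 0 ≤ MB := by simpa using (norm_nonneg _).trans (hMB 1 one_pos)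
  have hbound : ∀ t ∈ Ioi lam, S.Mem (RB t - RA t) ∧
      S.inorm (RB t - RA t) ≤ MB * S.inorm W * MA * t ^ (-2 : ℝ) := by
    intro t (ht : lam < t)
    have ht0 : 0 < t := hlam.trans ht
    rw [(hRA t ht0).sub_eq_comp_comp (hRB t ht0) hdom hWext]
    refine ⟨S.comp_mem _ _ hW, (S.inorm_comp_le _ _ _ hW).trans ?_⟩
    calc ‖RB t‖ * S.inorm W * ‖RA t‖ ≤ MB / t * S.inorm W * (MA / t) := by
          have := S.inorm_nonneg W
          gcongr
          exacts [hMB t ht0, hMA t ht0]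
      _ = MB * S.inorm W * MA * t ^ (-2 : ℝ) := by
          rw [Real.rpow_neg ht0.le, Real.rpow_two]; field_simp
  have hcont : ContinuousOn (fun t => RB t - RA t) (Ioi lam) :=
    (continuousOn_Ioi_of_isResolvent hRB hMB hlam).sub
      (continuousOn_Ioi_of_isResolvent hRA hMA hlam)
  exact S.integrable_and_mem_integral (hcont.aestronglyMeasurable measurableSet_Ioi)
    ((integrableOn_Ioi_rpow_of_lt (by norm_num) hlam).const_mul _)
    ((ae_restrict_iff' measurableSet_Ioi).mpr (ae_of_all _ hbound))

end Resolvents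

section Pdet

variable {S : OperatorIdeal X} {tr : (X →L[ℂ] X) → ℂ} {RA RB RC : ℝ → (X →L[ℂ] X)} {lam : ℝ}

theorem pdet_mul_pdet
    (htr_add : ∀ S' T : X →L[ℂ] X, S.Mem S' → S.Mem T → tr (S' + T) = tr S' + tr T)
    (hAB : IntegrableOn (fun t => RB t - RA t) (Ioi lam))
    (hBC : IntegrableOn (fun t => RC t - RB t) (Ioi lam))
    (hmemAB : S.Mem (∫ t in Ioi lam, (RB t - RA t)))
    (hmemBC : S.Mem (∫ t in Ioi lam, (RC t - RB t))) :
    pdet tr RA RB lam * pdet tr RB RC lam = pdet tr RA RC lam := by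
  rw [pdet, pdet, pdet, ← Complex.exp_add, ← htr_add _ _ hmemAB hmemBC, ← integral_add hAB hBC]
  simp only [sub_add_sub_cancel']

theorem pdet_self (htr_zero : tr 0 = 0) : pdet tr RA RA lam = 1 := by
  simp [pdet, htr_zero]

end Pdet

theorem pdet_multiplicative_general
    (S1 : OperatorIdeal X) (tr : (X →L[ℂ] X) → ℂ)
    (htr_add : ∀ S T : X →L[ℂ] X, S1.Mem S → S1.Mem T → tr (S + T) = tr S + tr T)
    (A B C : X →ₗ.[ℂ] X)
    (RA RB RC : ℝ → (X →L[ℂ] X))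
    (hRA : ∀ t > (0 : ℝ), IsResolvent A t (RA t))
    (hRB : ∀ t > (0 : ℝ), IsResolvent B t (RB t))
    (hRC : ∀ t > (0 : ℝ), IsResolvent C t (RC t))
    (MA MB MC : ℝ)
    (hMA : IsLUB ((fun t => t * ‖RA t‖) '' Ioi (0 : ℝ)) MA)
    (hMB : IsLUB ((fun t => t * ‖RB t‖) '' Ioi (0 : ℝ)) MB)
    (hMC : IsLUB ((fun t => t * ‖RC t‖) '' Ioi (0 : ℝ)) MC)
    (hdomAB : A.domain ≤ B.domain) (hdomBC : B.domain ≤ C.domain)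
    -- `B - A` and `C - B` are nuclear, with bounded extensions `W1`, `W2`:
    (W1 : X →L[ℂ] X) (hW1 : S1.Mem W1)
    (hW1ext : ∀ x : A.domain, W1 (x : X) = B ⟨(x : X), hdomAB x.2⟩ - A x)
    (W2 : X →L[ℂ] X) (hW2 : S1.Mem W2)
    (hW2ext : ∀ x : B.domain, W2 (x : X) = C ⟨(x : X), hdomBC x.2⟩ - B x) :
    ∀ lam > (0 : ℝ),
      pdet tr RA RB lam * pdet tr RB RC lam = pdet tr RA RC lam ∧
        pdet tr RA RB lam * pdet tr RB RA lam = 1 := by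
  intro lam hlam
  have bound {R : ℝ → (X →L[ℂ] X)} {M : ℝ} (hM : IsLUB ((fun t => t * ‖R t‖) '' Ioi 0) M) :
      ∀ t > (0 : ℝ), ‖R t‖ ≤ M / t := fun _ => norm_le_div_of_mem_upperBounds hM.1
  obtain ⟨hintAB, hmemAB⟩ := integrableOn_resolvent_sub_and_mem_integral S1 hRA hRB
    (bound hMA) (bound hMB) hdomAB hW1 hW1ext hlam
  obtain ⟨hintBC, hmemBC⟩ := integrableOn_resolvent_sub_and_mem_integral S1 hRB hRC
    (bound hMB) (bound hMC) hdomBC hW2 hW2ext hlam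
  have hintBA : IntegrableOn (fun t => RA t - RB t) (Ioi lam) := by
    simpa only [Pi.neg_def, neg_sub] using hintAB.neg
  have hmemBA : S1.Mem (∫ t in Ioi lam, (RA t - RB t)) := by
    simpa only [neg_one_smul, ← integral_neg, neg_sub] using S1.smul_mem (-1) hmemAB
  have htr_zero : tr 0 = 0 := by
    simpa using htr_add 0 0 S1.zero_mem S1.zero_mem
  exact ⟨pdet_mul_pdet htr_add hintAB hintBC hmemAB hmemBC,
    (pdet_mul_pdet htr_add hintAB hintBA hmemAB hmemBA).trans (pdet_self htr_zero)⟩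

/-- Multiplicativity of the perturbation determinant: for nonpositive operators `A, B, C`
with nuclear differences, `Δ_{B/A}(λ) Δ_{C/B}(λ) = Δ_{C/A}(λ)` for all `λ > 0`; in
particular `Δ_{B/A}(λ) Δ_{A/B}(λ) = 1`.  Here `S1` is the ideal of nuclear operators on a
space with the approximation property, with its continuous linear trace `tr`. -/
theorem pdet_multiplicative
    (S1 : OperatorIdeal X) (tr : (X →L[ℂ] X) → ℂ)
    (htr_add : ∀ S T : X →L[ℂ] X, S1.Mem S → S1.Mem T → tr (S + T) = tr S + tr T)
    (htr_smul : ∀ (c : ℂ) (S : X →L[ℂ] X), S1.Mem S → tr (c • S) = c * tr S)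
    (htr_bound : ∀ S : X →L[ℂ] X, S1.Mem S → ‖tr S‖ ≤ S1.inorm S)
    (A B C : X →ₗ.[ℂ] X)
    (hAclosed : IsClosed (A.graph : Set (X × X)))
    (hBclosed : IsClosed (B.graph : Set (X × X)))
    (hCclosed : IsClosed (C.graph : Set (X × X)))
    (hAdense : Dense (A.domain : Set X)) (hBdense : Dense (B.domain : Set X))
    (hCdense : Dense (C.domain : Set X))
    (RA RB RC : ℝ → (X →L[ℂ] X))
    (hRA : ∀ t > (0 : ℝ), IsResolvent A t (RA t))
    (hRB : ∀ t > (0 : ℝ), IsResolvent B t (RB t))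
    (hRC : ∀ t > (0 : ℝ), IsResolvent C t (RC t))
    (MA MB MC : ℝ)
    (hMA : IsLUB ((fun t => t * ‖RA t‖) '' Ioi (0 : ℝ)) MA)
    (hMB : IsLUB ((fun t => t * ‖RB t‖) '' Ioi (0 : ℝ)) MB)
    (hMC : IsLUB ((fun t => t * ‖RC t‖) '' Ioi (0 : ℝ)) MC)
    (hdomAB : A.domain ≤ B.domain) (hdomBC : B.domain ≤ C.domain)
    -- `B - A` and `C - B` are nuclear, with bounded extensions `W1`, `W2`:
    (W1 : X →L[ℂ] X) (hW1 : S1.Mem W1)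
    (hW1ext : ∀ x : A.domain, W1 (x : X) = B ⟨(x : X), hdomAB x.2⟩ - A x)
    (W2 : X →L[ℂ] X) (hW2 : S1.Mem W2)
    (hW2ext : ∀ x : B.domain, W2 (x : X) = C ⟨(x : X), hdomBC x.2⟩ - B x) :
    ∀ lam > (0 : ℝ),
      pdet tr RA RB lam * pdet tr RB RC lam = pdet tr RA RC lam ∧
        pdet tr RA RB lam * pdet tr RB RA lam = 1 :=
  pdet_multiplicative_general S1 tr htr_add A B C RA RB RC hRA hRB hRC MA MB MC hMA hMB hMC hdomAB
    hdomBC W1 hW1 hW1ext W2 hW2 hW2ext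
end
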